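/- arXiv:2505.01763 — 3 statements merged into one kernel-verified Lean document; each statement's English description precedes it below -/
import Mathlib

section
/- Foster's lemma: Let G = (V, F, c) be a weighted graph with |V| = n and nonnegative edge weights, with Laplacian L_G and Moore–Penrose pseudoinverse L_G⁺. For each edge {i,j} ∈ F let R_{ij} = (δ_i − δ_j)ᵀ L_G⁺ (δ_i − δ_j) be its effective resistance. Then Σ_{{i,j}∈F} c_{ij} · R_{ij} ≤ n. -/
open Matrix BigOperators

/-- The vector `δ_i - δ_j` in `ℝ^n`. -/
noncomputable def dvec {n : ℕ} (i j : Fin n) : Fin n → ℝ :=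
  fun k => (if k = i then (1 : ℝ) else 0) - (if k = j then (1 : ℝ) else 0)

/-- The rank-one matrix `(δ_i - δ_j)(δ_i - δ_j)ᵀ`, as a function of the unordered pair `{i,j}`. -/
noncomputable def edgeMat {n : ℕ} : Sym2 (Fin n) → Matrix (Fin n) (Fin n) ℝ :=
  Sym2.lift ⟨fun i j => Matrix.vecMulVec (dvec i j) (dvec i j), by
    intro i j
    ext a b
    simp [Matrix.vecMulVec_apply, dvec]
    ring⟩

/-- `M` is the Moore–Penrose pseudoinverse of `L` (the four Penrose equations). -/
def IsMP {n : ℕ} (L M : Matrix (Fin n) (Fin n) ℝ) : Prop :=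
  L * M * L = L ∧ M * L * M = M ∧ (L * M)ᵀ = L * M ∧ (M * L)ᵀ = M * L

/-- The Moore–Penrose pseudoinverse (chosen via the Penrose equations, which determine
it uniquely whenever it exists). -/
noncomputable def pinv {n : ℕ} (L : Matrix (Fin n) (Fin n) ℝ) : Matrix (Fin n) (Fin n) ℝ :=
  haveI := Classical.propDecidable (∃ M, IsMP L M)
  if h : ∃ M, IsMP L M then h.choose else 0

/-- Effective resistance `(δ_i - δ_j)ᵀ L⁺ (δ_i - δ_j)` of an unordered pair, given `L⁺`. -/
noncomputable def res {n : ℕ} (Lp : Matrix (Fin n) (Fin n) ℝ) : Sym2 (Fin n) → ℝ :=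
  Sym2.lift ⟨fun i j => dvec i j ⬝ᵥ (Lp *ᵥ dvec i j), by
    intro i j
    show dvec i j ⬝ᵥ (Lp *ᵥ dvec i j) = dvec j i ⬝ᵥ (Lp *ᵥ dvec j i)
    have h : dvec j i = -(dvec i j) := by
      funext k; simp [dvec, Pi.neg_apply]
    rw [h]
    simp [Matrix.mulVec_neg]⟩

/-- Laplacian of the weighted graph with edge set `F` and weights `c`. -/
noncomputable def lapG {n : ℕ} (F : Finset (Sym2 (Fin n))) (c : Sym2 (Fin n) → ℝ) :
    Matrix (Fin n) (Fin n) ℝ :=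
  ∑ f ∈ F, c f • edgeMat f

/-- The unordered pairs of distinct vertices contained in `e`. -/
def pairs {n : ℕ} (e : Finset (Fin n)) : Finset (Sym2 (Fin n)) :=
  e.sym2.filter fun f => ¬ f.IsDiag

/-- `Q_e(x) = max_{{i,j} ⊆ e} (x_i - x_j)²`. -/
noncomputable def Qe {n : ℕ} (x : Fin n → ℝ) (e : Finset (Fin n)) : ℝ :=
  ⨆ i ∈ e, ⨆ j ∈ e, (x i - x j) ^ 2

/-- The hypergraph energy `Q_H(x) = Σ_e w_e Q_e(x)`. -/
noncomputable def QH {n : ℕ} (E : Finset (Finset (Fin n))) (w : Finset (Fin n) → ℝ)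
    (x : Fin n → ℝ) : ℝ :=
  ∑ e ∈ E, w e * Qe x e

/-- Laplacian of the underlying (multi)graph of a hypergraph with weights `c e f`. -/
noncomputable def lapU {n : ℕ} (E : Finset (Finset (Fin n)))
    (c : Finset (Fin n) → Sym2 (Fin n) → ℝ) : Matrix (Fin n) (Fin n) ℝ :=
  ∑ e ∈ E, ∑ f ∈ pairs e, c e f • edgeMat f

/-- **Foster's lemma.** For a weighted graph `G = (V, F, c)` with `|V| = n` and nonnegative
edge weights, with Laplacian `L_G` and Moore–Penrose pseudoinverse `L_G⁺`, and effective
resistances `R_{ij} = (δ_i - δ_j)ᵀ L_G⁺ (δ_i - δ_j)`, one has `Σ_{{i,j}∈F} c_{ij} R_{ij} ≤ n`. -/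
theorem foster_lemma (n : ℕ) (F : Finset (Sym2 (Fin n))) (c : Sym2 (Fin n) → ℝ)
    (hF : ∀ f ∈ F, ¬ f.IsDiag) (hc : ∀ f ∈ F, 0 ≤ c f)
    (Lp : Matrix (Fin n) (Fin n) ℝ) (hLp : IsMP (lapG F c) Lp) :
    ∑ f ∈ F, c f * res Lp f ≤ (n : ℝ) := by
  obtain ⟨h1, h2, h3, h4⟩ := hLp
  set L := lapG F c with hL
  set P := Lp * L with hP
  have hres : ∀ f : Sym2 (Fin n), res Lp f = Matrix.trace (Lp * edgeMat f) := by
    intro f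
    induction f using Sym2.ind with
    | _ i j =>
      show dvec i j ⬝ᵥ (Lp *ᵥ dvec i j) = _
      have he : edgeMat s(i, j) = Matrix.vecMulVec (dvec i j) (dvec i j) := rfl
      rw [he]
      simp only [Matrix.trace, Matrix.diag, Matrix.mul_apply, Matrix.vecMulVec_apply,
        dotProduct, Matrix.mulVec, Finset.mul_sum]
      refine Finset.sum_congr rfl fun a _ => Finset.sum_congr rfl fun b _ => ?_
      ring
  have hsum : ∑ f ∈ F, c f * res Lp f = Matrix.trace P := by
    simp only [hres]
    rw [hP, hL, lapG, Matrix.mul_sum, Matrix.trace_sum]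
    refine Finset.sum_congr rfl fun f _ => ?_
    rw [Matrix.mul_smul, Matrix.trace_smul, smul_eq_mul]
  have hPP : P * P = P := by
    rw [hP, show Lp * L * (Lp * L) = (Lp * L * Lp) * L by rw [← mul_assoc], h2]
  have hPsym : ∀ a b, P a b = P b a := by
    intro a b
    conv_lhs => rw [← h4]
    rfl
  have hdiag : ∀ i, P i i ≤ 1 := by
    intro i
    have hdd : P i i = ∑ j, P i j ^ 2 := by
      conv_lhs => rw [← hPP]
      rw [Matrix.mul_apply]
      refine Finset.sum_congr rfl fun j _ => ?_
      rw [hPsym j i]; ring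
    have hle : P i i ^ 2 ≤ ∑ j, P i j ^ 2 :=
      Finset.single_le_sum (fun j _ => sq_nonneg (P i j)) (Finset.mem_univ i)
    nlinarith [hdd, hle]
  rw [hsum]
  calc Matrix.trace P = ∑ i, P i i := rfl
    _ ≤ ∑ _i : Fin n, (1 : ℝ) := Finset.sum_le_sum fun i _ => hdiag i
    _ = n := by simp
end

section
/- Convexity of log effective resistance: Fix a finite vertex set V and an edge set F on V such that the (unweighted) graph (V, F) is connected, and fix an edge f = {a, b} ∈ F. For strictly positive weights c ∈ ℝ^F_{>0}, let L(c) be the Laplacian of (V, F, c) and let R_f(c) = (δ_a − δ_b)ᵀ L(c)⁺ (δ_a − δ_b) be the effective resistance of f. Then the function c ↦ log R_f(c) is convex on the set {c ∈ ℝ^F : c_g > 0 for all g ∈ F}. -/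
open Matrix BigOperators

section AuxLogRes

variable {n : ℕ}

lemma dvec_dot (i j : Fin n) (x : Fin n → ℝ) : dvec i j ⬝ᵥ x = x i - x j := by
  simp [dvec, dotProduct, sub_mul, Finset.sum_sub_distrib]

lemma vmv_mulVec (u v x : Fin n → ℝ) : vecMulVec u v *ᵥ x = (v ⬝ᵥ x) • u := by
  ext k
  simp only [Matrix.mulVec, Matrix.vecMulVec_apply, dotProduct, Pi.smul_apply,
    smul_eq_mul]
  rw [Finset.sum_mul]
  exact Finset.sum_congr rfl fun i _ => by ring

lemma edgeMat_mk (i j : Fin n) : edgeMat s(i,j) = vecMulVec (dvec i j) (dvec i j) := rfl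

noncomputable def qf (x : Fin n → ℝ) : Sym2 (Fin n) → ℝ :=
  Sym2.lift ⟨fun i j => (x i - x j)^2, by intro i j; ring⟩

lemma qf_mk (x : Fin n → ℝ) (i j : Fin n) : qf x s(i,j) = (x i - x j)^2 := rfl

lemma qf_nonneg (x : Fin n → ℝ) (f : Sym2 (Fin n)) : 0 ≤ qf x f := by
  induction f using Sym2.ind with
  | _ i j => rw [qf_mk]; positivity

lemma quad_edge (f : Sym2 (Fin n)) (x : Fin n → ℝ) :
    x ⬝ᵥ (edgeMat f *ᵥ x) = qf x f := by
  induction f using Sym2.ind with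
  | _ i j =>
    rw [edgeMat_mk, vmv_mulVec, dotProduct_smul, smul_eq_mul,
      dotProduct_comm x (dvec i j), dvec_dot, qf_mk]
    ring

lemma dvec_sum (i j : Fin n) : ∑ k, dvec i j k = 0 := by
  simp [dvec, Finset.sum_sub_distrib]

def Jn (n : ℕ) : Matrix (Fin n) (Fin n) ℝ := Matrix.of fun _ _ => 1

lemma edgeMat_mul_Jn (f : Sym2 (Fin n)) : edgeMat f * Jn n = 0 := by
  induction f using Sym2.ind with
  | _ i j =>
    ext a b
    simp only [edgeMat_mk, Matrix.mul_apply, vecMulVec_apply, Jn, Matrix.of_apply, mul_one,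
      Matrix.zero_apply]
    rw [← Finset.mul_sum, dvec_sum, mul_zero]

lemma Jn_mul_edgeMat (f : Sym2 (Fin n)) : Jn n * edgeMat f = 0 := by
  induction f using Sym2.ind with
  | _ i j =>
    ext a b
    simp only [edgeMat_mk, Matrix.mul_apply, vecMulVec_apply, Jn, Matrix.of_apply, one_mul,
      Matrix.zero_apply]
    rw [← Finset.sum_mul, dvec_sum, zero_mul]

lemma edgeMat_transpose (f : Sym2 (Fin n)) : (edgeMat f)ᵀ = edgeMat f := by
  induction f using Sym2.ind with
  | _ i j => ext a b; simp [edgeMat_mk, vecMulVec_apply, transpose_apply]; ring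

lemma Jn_mul_Jn : Jn n * Jn n = (n : ℝ) • Jn n := by
  ext a b; simp [Jn, Matrix.mul_apply, Finset.sum_const, Finset.card_univ]

lemma Jn_transpose : (Jn n)ᵀ = Jn n := by ext a b; rfl

lemma lapG_transpose (F : Finset (Sym2 (Fin n))) (c : Sym2 (Fin n) → ℝ) :
    (lapG F c)ᵀ = lapG F c := by
  simp [lapG, transpose_sum, transpose_smul, edgeMat_transpose]

lemma lapG_mul_Jn (F : Finset (Sym2 (Fin n))) (c : Sym2 (Fin n) → ℝ) :
    lapG F c * Jn n = 0 := by
  simp [lapG, Finset.sum_mul, smul_mul_assoc, edgeMat_mul_Jn]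

lemma Jn_mul_lapG (F : Finset (Sym2 (Fin n))) (c : Sym2 (Fin n) → ℝ) :
    Jn n * lapG F c = 0 := by
  simp [lapG, Finset.mul_sum, mul_smul_comm, Jn_mul_edgeMat]

lemma sum_mulVec' (F : Finset (Sym2 (Fin n))) (A : Sym2 (Fin n) → Matrix (Fin n) (Fin n) ℝ)
    (x : Fin n → ℝ) : (∑ f ∈ F, A f) *ᵥ x = ∑ f ∈ F, A f *ᵥ x := by
  ext i
  simp only [Matrix.mulVec, dotProduct, Finset.sum_apply, Matrix.sum_apply,
    Finset.sum_mul]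
  exact Finset.sum_comm

lemma dotProduct_sum'' (F : Finset (Sym2 (Fin n))) (x : Fin n → ℝ)
    (g : Sym2 (Fin n) → Fin n → ℝ) :
    x ⬝ᵥ (∑ f ∈ F, g f) = ∑ f ∈ F, x ⬝ᵥ g f := by
  simp only [dotProduct, Finset.sum_apply, Finset.mul_sum]
  exact Finset.sum_comm

lemma energy_eq (F : Finset (Sym2 (Fin n))) (c : Sym2 (Fin n) → ℝ) (x : Fin n → ℝ) :
    x ⬝ᵥ (lapG F c *ᵥ x) = ∑ f ∈ F, c f * qf x f := by
  rw [lapG, sum_mulVec', dotProduct_sum'']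
  refine Finset.sum_congr rfl fun f _ => ?_
  rw [Matrix.smul_mulVec, dotProduct_smul, smul_eq_mul, quad_edge]

lemma IsMP.unique {L M₁ M₂ : Matrix (Fin n) (Fin n) ℝ}
    (h₁ : IsMP L M₁) (h₂ : IsMP L M₂) : M₁ = M₂ := by
  obtain ⟨a1, b1, c1, d1⟩ := h₁
  obtain ⟨a2, b2, c2, d2⟩ := h₂
  have c1' : M₁ᵀ * Lᵀ = L * M₁ := by rw [← Matrix.transpose_mul, c1]
  have c2' : M₂ᵀ * Lᵀ = L * M₂ := by rw [← Matrix.transpose_mul, c2]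
  have d1' : Lᵀ * M₁ᵀ = M₁ * L := by rw [← Matrix.transpose_mul, d1]
  have d2' : Lᵀ * M₂ᵀ = M₂ * L := by rw [← Matrix.transpose_mul, d2]
  have ta1 : Lᵀ * M₁ᵀ * Lᵀ = Lᵀ := by
    rw [← Matrix.transpose_mul, ← Matrix.transpose_mul, ← Matrix.mul_assoc, a1]
  have ta2 : Lᵀ * M₂ᵀ * Lᵀ = Lᵀ := by
    rw [← Matrix.transpose_mul, ← Matrix.transpose_mul, ← Matrix.mul_assoc, a2]
  have e1 : M₁ = M₁ * L * M₂ := by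
    calc M₁ = M₁ * L * M₁ := b1.symm
    _ = M₁ * M₁ᵀ * Lᵀ := by
        rw [Matrix.mul_assoc, ← c1, Matrix.transpose_mul, ← Matrix.mul_assoc]
    _ = M₁ * M₁ᵀ * (Lᵀ * M₂ᵀ * Lᵀ) := by rw [ta2]
    _ = M₁ * (M₁ᵀ * Lᵀ) * (M₂ᵀ * Lᵀ) := by simp only [Matrix.mul_assoc]
    _ = M₁ * (L * M₁) * (L * M₂) := by rw [c1', c2']
    _ = M₁ * L * M₂ := by simp only [← Matrix.mul_assoc]; rw [b1]
  have e2 : M₂ = M₁ * L * M₂ := by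
    calc M₂ = M₂ * L * M₂ := b2.symm
    _ = Lᵀ * M₂ᵀ * M₂ := by rw [← d2, Matrix.transpose_mul]
    _ = Lᵀ * M₁ᵀ * Lᵀ * M₂ᵀ * M₂ := by rw [ta1]
    _ = (Lᵀ * M₁ᵀ) * ((Lᵀ * M₂ᵀ) * M₂) := by simp only [Matrix.mul_assoc]
    _ = (M₁ * L) * ((M₂ * L) * M₂) := by rw [d1', d2']
    _ = M₁ * L * M₂ := by rw [b2]
  rw [e1, ← e2]

lemma isMP_of_aux {L P : Matrix (Fin n) (Fin n) ℝ} (hPt : Pᵀ = P)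
    (hLP : L * P = 0) (hPL : P * L = 0) (hPP : P * P = P)
    (hdet : IsUnit (L + P).det) :
    IsMP L ((L + P)⁻¹ - P) := by
  set A := L + P with hA
  have hAinv : A * A⁻¹ = 1 := Matrix.mul_nonsing_inv A hdet
  have hinvA : A⁻¹ * A = 1 := Matrix.nonsing_inv_mul A hdet
  have hAP : A * P = P := by rw [hA, add_mul, hLP, hPP, zero_add]
  have hPA : P * A = P := by rw [hA, mul_add, hPL, hPP, zero_add]
  have hiP : A⁻¹ * P = P := by
    calc A⁻¹ * P = A⁻¹ * (A * P) := by rw [hAP]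
    _ = (A⁻¹ * A) * P := by rw [Matrix.mul_assoc]
    _ = P := by rw [hinvA, Matrix.one_mul]
  have hPi : P * A⁻¹ = P := by
    calc P * A⁻¹ = (P * A) * A⁻¹ := by rw [hPA]
    _ = P * (A * A⁻¹) := by rw [Matrix.mul_assoc]
    _ = P := by rw [hAinv, Matrix.mul_one]
  have hL : L = A - P := by rw [hA, add_sub_cancel_right]
  have hLM : L * (A⁻¹ - P) = 1 - P := by
    rw [Matrix.mul_sub, hLP, sub_zero]
    nth_rewrite 1 [hL]
    rw [Matrix.sub_mul, hAinv, hPi]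
  have hML : (A⁻¹ - P) * L = 1 - P := by
    rw [Matrix.sub_mul, hPL, sub_zero]
    nth_rewrite 1 [hL]
    rw [Matrix.mul_sub, hinvA, hiP]
  refine ⟨?_, ?_, ?_, ?_⟩
  · rw [Matrix.mul_assoc, hML, Matrix.mul_sub, Matrix.mul_one, hLP, sub_zero]
  · rw [Matrix.mul_assoc, hLM, Matrix.mul_sub, Matrix.mul_one, Matrix.sub_mul, hiP, hPP,
      sub_self, sub_zero]
  · rw [hLM, Matrix.transpose_sub, Matrix.transpose_one, hPt]
  · rw [hML, Matrix.transpose_sub, Matrix.transpose_one, hPt]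

lemma bil_symm {L : Matrix (Fin n) (Fin n) ℝ} (hLt : Lᵀ = L) (x z : Fin n → ℝ) :
    x ⬝ᵥ (L *ᵥ z) = z ⬝ᵥ (L *ᵥ x) := by
  rw [Matrix.dotProduct_mulVec, ← Matrix.mulVec_transpose, hLt, dotProduct_comm]

lemma res_mk (Lp : Matrix (Fin n) (Fin n) ℝ) (i j : Fin n) :
    res Lp s(i,j) = dvec i j ⬝ᵥ (Lp *ᵥ dvec i j) := rfl

lemma const_of_zero_energy {F : Finset (Sym2 (Fin n))}
    (hconn : (SimpleGraph.fromEdgeSet (F : Set (Sym2 (Fin n)))).Connected)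
    {c : Sym2 (Fin n) → ℝ} (hc : ∀ g ∈ F, 0 < c g) {x : Fin n → ℝ}
    (hE : ∑ f ∈ F, c f * qf x f = 0) : ∀ a b : Fin n, x a = x b := by
  have hterm : ∀ f ∈ F, c f * qf x f = 0 :=
    (Finset.sum_eq_zero_iff_of_nonneg fun f hf =>
      mul_nonneg (hc f hf).le (qf_nonneg x f)).1 hE
  have hx : ∀ i j : Fin n, s(i,j) ∈ F → x i = x j := by
    intro i j hij
    have h0 : qf x s(i,j) = 0 := by
      have := hterm _ hij
      rcases mul_eq_zero.1 this with h | h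
      · exact absurd h (hc _ hij).ne'
      · exact h
    rw [qf_mk] at h0
    have := pow_eq_zero_iff (n := 2) (by norm_num) |>.1 h0
    linarith
  intro a b
  obtain ⟨w⟩ := hconn.preconnected a b
  induction w with
  | nil => rfl
  | cons h p ih =>
    rw [SimpleGraph.fromEdgeSet_adj] at h
    exact (hx _ _ h.1).trans ih

lemma lapG_mulVec_const (F : Finset (Sym2 (Fin n))) (c : Sym2 (Fin n) → ℝ) (s : ℝ) :
    lapG F c *ᵥ (fun _ => s) = 0 := by
  ext i
  have hrow : ∑ k, lapG F c i k = 0 := by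
    have := congrFun (congrFun (lapG_mul_Jn F c) i) i
    simpa [Matrix.mul_apply, Jn] using this
  calc (lapG F c *ᵥ (fun _ => s)) i = ∑ k, lapG F c i k * s := rfl
  _ = (∑ k, lapG F c i k) * s := by rw [Finset.sum_mul]
  _ = 0 := by rw [hrow, zero_mul]

lemma Jn_mulVec (x : Fin n → ℝ) : Jn n *ᵥ x = fun _ => ∑ k, x k := by
  ext i; simp [Jn, mulVec, dotProduct]

/-- The key facts about effective resistance for a fixed positive weight vector. -/
lemma key_facts {F : Finset (Sym2 (Fin n))}
    (hconn : (SimpleGraph.fromEdgeSet (F : Set (Sym2 (Fin n)))).Connected)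
    {v w : Fin n} (hvw : v ≠ w) (hvwF : s(v,w) ∈ F)
    {c : Sym2 (Fin n) → ℝ} (hc : ∀ g ∈ F, 0 < c g) :
    0 < res (pinv (lapG F c)) s(v,w) ∧
    (∃ y : Fin n → ℝ, dvec v w ⬝ᵥ y = 1 ∧
      ∑ f ∈ F, c f * qf y f = (res (pinv (lapG F c)) s(v,w))⁻¹) ∧
    (∀ x : Fin n → ℝ, dvec v w ⬝ᵥ x = 1 →
      (res (pinv (lapG F c)) s(v,w))⁻¹ ≤ ∑ f ∈ F, c f * qf x f) := by
  have hn : 0 < n := (hconn.nonempty.some).pos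
  set L := lapG F c with hLdef
  set P : Matrix (Fin n) (Fin n) ℝ := (n : ℝ)⁻¹ • Jn n with hPdef
  have hLt : Lᵀ = L := lapG_transpose F c
  have hPt : Pᵀ = P := by rw [hPdef, Matrix.transpose_smul, Jn_transpose]
  have hLP : L * P = 0 := by rw [hPdef, Matrix.mul_smul, hLdef, lapG_mul_Jn, smul_zero]
  have hPL : P * L = 0 := by rw [hPdef, Matrix.smul_mul, hLdef, Jn_mul_lapG, smul_zero]
  have hn0 : (n : ℝ) ≠ 0 := Nat.cast_ne_zero.2 hn.ne'
  have hPP : P * P = P := by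
    rw [hPdef, Matrix.smul_mul, Matrix.mul_smul, Jn_mul_Jn, smul_smul, smul_smul]
    congr 1
    field_simp
  have hPx : ∀ x : Fin n → ℝ, x ⬝ᵥ (P *ᵥ x) = (n : ℝ)⁻¹ * (∑ k, x k)^2 := by
    intro x
    rw [hPdef, Matrix.smul_mulVec, dotProduct_smul, Jn_mulVec, smul_eq_mul]
    congr 1
    calc x ⬝ᵥ (fun _ => ∑ k, x k) = ∑ i, x i * (∑ k, x k) := rfl
    _ = (∑ k, x k)^2 := by rw [← Finset.sum_mul]; ring
  have hker : ∀ y : Fin n → ℝ, (L + P) *ᵥ y = 0 → y = 0 := by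
    intro y hy
    have hq : y ⬝ᵥ ((L + P) *ᵥ y) = 0 := by rw [hy, dotProduct_zero]
    rw [Matrix.add_mulVec, dotProduct_add, hLdef, energy_eq, hPx] at hq
    have h1 : 0 ≤ ∑ f ∈ F, c f * qf y f :=
      Finset.sum_nonneg fun f hf => mul_nonneg (hc f hf).le (qf_nonneg y f)
    have h2 : 0 ≤ (n : ℝ)⁻¹ * (∑ k, y k)^2 := by positivity
    have hE0 : ∑ f ∈ F, c f * qf y f = 0 := by linarith
    have hS0 : (∑ k, y k) = 0 := by
      have h4 : (n : ℝ)⁻¹ * (∑ k, y k)^2 = 0 := by linarith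
      have h3 : (∑ k, y k)^2 = 0 := by
        rcases mul_eq_zero.1 h4 with h | h
        · exact absurd h (inv_ne_zero hn0)
        · exact h
      exact pow_eq_zero_iff (by norm_num) |>.1 h3
    have hconst := const_of_zero_energy hconn hc hE0
    funext i
    have hsum : ∑ k : Fin n, y k = ∑ _k : Fin n, y i :=
      Finset.sum_congr rfl fun k _ => hconst k i
    rw [Finset.sum_const, Finset.card_univ, Fintype.card_fin, nsmul_eq_mul] at hsum
    have h5 : (n : ℝ) * y i = 0 := by rw [← hsum, hS0]
    have h6 := mul_eq_zero.1 h5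
    simpa [hn0] using h6
  have hdet : IsUnit (L + P).det := by
    by_contra hdet
    rw [isUnit_iff_ne_zero, not_not] at hdet
    obtain ⟨y, hy, hy0⟩ := (Matrix.exists_mulVec_eq_zero_iff).2 hdet
    exact hy (hker y hy0)
  have hMP : IsMP L ((L + P)⁻¹ - P) := isMP_of_aux hPt hLP hPL hPP hdet
  set M : Matrix (Fin n) (Fin n) ℝ := (L + P)⁻¹ - P with hMdef
  have hex : ∃ N, IsMP L N := ⟨M, hMP⟩
  have hpinv : pinv L = M := by
    have h1 : IsMP L (pinv L) := by
      rw [pinv, dif_pos hex]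
      exact hex.choose_spec
    exact IsMP.unique h1 hMP
  have hLM : L * M = 1 - P := by
    rw [hMdef, Matrix.mul_sub, hLP, sub_zero]
    have hAinv : (L + P) * (L + P)⁻¹ = 1 := Matrix.mul_nonsing_inv _ hdet
    have hPi : P * (L + P)⁻¹ = P := by
      have hPA : P * (L + P) = P := by rw [mul_add, hPL, hPP, zero_add]
      calc P * (L + P)⁻¹ = (P * (L + P)) * (L + P)⁻¹ := by rw [hPA]
      _ = P * ((L + P) * (L + P)⁻¹) := by rw [Matrix.mul_assoc]
      _ = P := by rw [hAinv, Matrix.mul_one]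
    calc L * (L + P)⁻¹ = ((L + P) - P) * (L + P)⁻¹ := by rw [add_sub_cancel_right]
    _ = (L + P) * (L + P)⁻¹ - P * (L + P)⁻¹ := by rw [Matrix.sub_mul]
    _ = 1 - P := by rw [hAinv, hPi]
  set d : Fin n → ℝ := dvec v w with hddef
  have hPd : P *ᵥ d = 0 := by
    rw [hPdef, Matrix.smul_mulVec, Jn_mulVec]
    have hz : (fun _ : Fin n => ∑ k, d k) = 0 := by
      funext i; rw [hddef, dvec_sum]; rfl
    rw [hz, smul_zero]
  set y : Fin n → ℝ := M *ᵥ d with hydef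
  have hLy : L *ᵥ y = d := by
    rw [hydef, Matrix.mulVec_mulVec, hLM, Matrix.sub_mulVec, Matrix.one_mulVec, hPd, sub_zero]
  set R : ℝ := res (pinv L) s(v,w) with hRdef
  have hRval : R = d ⬝ᵥ y := by rw [hRdef, res_mk, hpinv, hydef, hddef]
  have hRE : R = ∑ f ∈ F, c f * qf y f := by
    rw [hRval, ← hLy, dotProduct_comm, hLdef, energy_eq]
  have hEnn : 0 ≤ ∑ f ∈ F, c f * qf y f :=
    Finset.sum_nonneg fun f hf => mul_nonneg (hc f hf).le (qf_nonneg y f)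
  have hdv : d v = 1 := by
    rw [hddef]
    simp [dvec, hvw]
  have hRpos : 0 < R := by
    rcases (hRE ▸ hEnn).lt_or_eq with h | h
    · exact h
    · exfalso
      have hE0 : ∑ f ∈ F, c f * qf y f = 0 := by rw [← hRE, ← h]
      have hconst := const_of_zero_energy hconn hc hE0
      have hyc : y = fun _ => y v := funext fun i => hconst i v
      have hd0 : d = 0 := by
        rw [← hLy, hyc, hLdef, lapG_mulVec_const]
      rw [hd0] at hdv
      simpa using hdv
  refine ⟨hRpos, ?_, ?_⟩
  · refine ⟨R⁻¹ • y, ?_, ?_⟩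
    · rw [dotProduct_smul, smul_eq_mul, ← hRval, inv_mul_cancel₀ hRpos.ne']
    · rw [← energy_eq, ← hLdef, Matrix.mulVec_smul, hLy, dotProduct_smul, smul_dotProduct,
        smul_eq_mul, smul_eq_mul, dotProduct_comm y d, ← hRval,
        inv_mul_cancel₀ hRpos.ne', mul_one]
  · intro x hx
    set r : ℝ := R⁻¹ with hrdef
    set z : Fin n → ℝ := x - r • y with hzdef
    have hxz : x = z + r • y := by rw [hzdef, sub_add_cancel]
    have hdz : d ⬝ᵥ z = 0 := by
      rw [hzdef, dotProduct_sub, dotProduct_smul, smul_eq_mul, ← hRval, hddef, hx, hrdef,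
        inv_mul_cancel₀ hRpos.ne', sub_self]
    have hEz : 0 ≤ ∑ f ∈ F, c f * qf z f :=
      Finset.sum_nonneg fun f hf => mul_nonneg (hc f hf).le (qf_nonneg z f)
    have hexp : ∑ f ∈ F, c f * qf x f = (∑ f ∈ F, c f * qf z f) + r := by
      rw [← energy_eq, ← hLdef, hxz, Matrix.mulVec_add, Matrix.mulVec_smul, hLy,
        dotProduct_add, add_dotProduct, add_dotProduct]
      have t1 : z ⬝ᵥ (r • d) = 0 := by
        rw [dotProduct_smul, smul_eq_mul, dotProduct_comm, hdz, mul_zero]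
      have t2 : (r • y) ⬝ᵥ (L *ᵥ z) = 0 := by
        rw [bil_symm hLt, Matrix.mulVec_smul, hLy, dotProduct_smul, smul_eq_mul,
          dotProduct_comm, hdz, mul_zero]
      have t3 : (r • y) ⬝ᵥ (r • d) = r := by
        rw [smul_dotProduct, dotProduct_smul, smul_eq_mul, smul_eq_mul,
          dotProduct_comm y d, ← hRval, hrdef, inv_mul_cancel₀ hRpos.ne', mul_one]
      rw [t1, t2, t3, hLdef, energy_eq]
      ring
    rw [hexp]
    rw [hrdef]
    linarith
end AuxLogRes


/-- **Convexity of log effective resistance.** Fix a finite vertex set, an edge set `F`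
making the unweighted graph connected, and an edge `f₀ ∈ F`.  Then
`c ↦ log R_{f₀}(c)` is convex on the open positive orthant `{c : ∀ g ∈ F, c_g > 0}`,
where `R_{f₀}(c)` is the effective resistance of `f₀` in the graph with weights `c`. -/
theorem log_effective_resistance_convex (n : ℕ) (F : Finset (Sym2 (Fin n)))
    (hF : ∀ f ∈ F, ¬ f.IsDiag)
    (hconn : (SimpleGraph.fromEdgeSet (F : Set (Sym2 (Fin n)))).Connected)
    (f₀ : Sym2 (Fin n)) (hf₀ : f₀ ∈ F) :
    ConvexOn ℝ {c : Sym2 (Fin n) → ℝ | ∀ g ∈ F, 0 < c g}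
      (fun c => Real.log (res (pinv (lapG F c)) f₀)) := by
  induction f₀ using Sym2.ind with
  | _ v w =>
  have hvw : v ≠ w := by
    have := hF _ hf₀
    simpa [Sym2.mk_isDiag_iff] using this
  have hSconv : Convex ℝ {c : Sym2 (Fin n) → ℝ | ∀ g ∈ F, 0 < c g} := by
    intro c1 h1 c2 h2 a b ha hb hab
    intro g hg
    simp only [Pi.add_apply, Pi.smul_apply, smul_eq_mul]
    rcases ha.eq_or_lt with h | h
    · have hb1 : b = 1 := by linarith
      rw [← h, hb1]
      simpa using h2 g hg
    · have h2' : 0 ≤ b * c2 g := mul_nonneg hb (h2 g hg).le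
      have h1' : 0 < a * c1 g := mul_pos h (h1 g hg)
      linarith
  refine ⟨hSconv, ?_⟩
  intro c1 h1 c2 h2 a b ha hb hab
  have hclS : ∀ g ∈ F, 0 < (a • c1 + b • c2) g := hSconv h1 h2 ha hb hab
  obtain ⟨hRl, ⟨y, hy1, hyE⟩, -⟩ := key_facts hconn hvw hf₀ hclS
  obtain ⟨hR1, -, hb1⟩ := key_facts hconn hvw hf₀ h1
  obtain ⟨hR2, -, hb2⟩ := key_facts hconn hvw hf₀ h2
  set R1 : ℝ := res (pinv (lapG F c1)) s(v,w) with hR1def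
  set R2 : ℝ := res (pinv (lapG F c2)) s(v,w) with hR2def
  set Rl : ℝ := res (pinv (lapG F (a • c1 + b • c2))) s(v,w) with hRldef
  have key1 := hb1 y hy1
  have key2 := hb2 y hy1
  have hsum : ∑ f ∈ F, (a • c1 + b • c2) f * qf y f
      = a * (∑ f ∈ F, c1 f * qf y f) + b * (∑ f ∈ F, c2 f * qf y f) := by
    rw [Finset.mul_sum, Finset.mul_sum, ← Finset.sum_add_distrib]
    refine Finset.sum_congr rfl fun f _ => ?_
    simp only [Pi.add_apply, Pi.smul_apply, smul_eq_mul]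
    ring
  have hgm : (R1⁻¹) ^ a * (R2⁻¹) ^ b ≤ Rl⁻¹ := by
    calc (R1⁻¹) ^ a * (R2⁻¹) ^ b ≤ a * R1⁻¹ + b * R2⁻¹ := by
          exact Real.geom_mean_le_arith_mean2_weighted ha hb (inv_nonneg.2 hR1.le) (inv_nonneg.2 hR2.le) hab
    _ ≤ a * (∑ f ∈ F, c1 f * qf y f) + b * (∑ f ∈ F, c2 f * qf y f) :=
      add_le_add (mul_le_mul_of_nonneg_left key1 ha) (mul_le_mul_of_nonneg_left key2 hb)
    _ = Rl⁻¹ := by rw [← hsum, hyE]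
  have hpow1 : (0:ℝ) < R1 ^ a := Real.rpow_pos_of_pos hR1 a
  have hpow2 : (0:ℝ) < R2 ^ b := Real.rpow_pos_of_pos hR2 b
  have hgm' : (R1 ^ a * R2 ^ b)⁻¹ ≤ Rl⁻¹ := by
    rw [mul_inv]
    rw [Real.inv_rpow hR1.le, Real.inv_rpow hR2.le] at hgm
    exact hgm
  have hRl' : Rl ≤ R1 ^ a * R2 ^ b := by
    have := (inv_le_inv₀ (by positivity) hRl).1 hgm'
    exact this
  have hlog : Real.log Rl ≤ a * Real.log R1 + b * Real.log R2 := by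
    calc Real.log Rl ≤ Real.log (R1 ^ a * R2 ^ b) := Real.log_le_log hRl hRl'
    _ = Real.log (R1 ^ a) + Real.log (R2 ^ b) := Real.log_mul hpow1.ne' hpow2.ne'
    _ = a * Real.log R1 + b * Real.log R2 := by
        rw [Real.log_rpow hR1, Real.log_rpow hR2]
  simpa only [smul_eq_mul] using hlog
end

section
/- Pseudoinverse quadratic forms under spectral approximation: Let L and L̃ be real symmetric positive semidefinite n×n matrices and let 0 ≤ α < 1 satisfy (1−α)·xᵀLx ≤ xᵀL̃x ≤ (1+α)·xᵀLx for all x ∈ ℝⁿ. Then ker(L̃) = ker(L), and for all x ∈ ℝⁿ: (1/(1+α))·xᵀL⁺x ≤ xᵀL̃⁺x ≤ (1/(1−α))·xᵀL⁺x, where L⁺ and L̃⁺ are the Moore–Penrose pseudoinverses of L and L̃. In particular, if G̃ is an α-spectral sparsifier of a weighted graph G, then for every pair of vertices i, j the effective resistances satisfy (1/(1+α))·R_{ij} ≤ R̃_{ij} ≤ (1/(1−α))·R_{ij}. -/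
open Matrix BigOperators

section SpecAux

open Matrix

variable {n : ℕ}

private lemma sym_shift {M : Matrix (Fin n) (Fin n) ℝ} (hM : Mᵀ = M) (v w : Fin n → ℝ) :
    (M *ᵥ v) ⬝ᵥ w = v ⬝ᵥ (M *ᵥ w) := by
  rw [Matrix.dotProduct_mulVec, ← Matrix.mulVec_transpose, hM]

private lemma isMP_unique {L M N : Matrix (Fin n) (Fin n) ℝ}
    (hM : IsMP L M) (hN : IsMP L N) : M = N := by
  obtain ⟨m1, m2, m3, m4⟩ := hM
  obtain ⟨n1, n2, n3, n4⟩ := hN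
  have h1 : L * M = L * N := by
    calc L * M = (L * M)ᵀ := m3.symm
    _ = Mᵀ * Lᵀ := Matrix.transpose_mul _ _
    _ = Mᵀ * (L * N * L)ᵀ := by rw [n1]
    _ = Mᵀ * (Lᵀ * (L * N)ᵀ) := by rw [Matrix.transpose_mul (L * N) L]
    _ = (Mᵀ * Lᵀ) * (L * N)ᵀ := (mul_assoc _ _ _).symm
    _ = (L * M)ᵀ * (L * N) := by rw [← Matrix.transpose_mul, n3]
    _ = (L * M) * (L * N) := by rw [m3]
    _ = ((L * M) * L) * N := (mul_assoc _ _ _).symm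
    _ = L * N := by rw [m1]
  have h2 : M * L = N * L := by
    have hLNL : L * (N * L) = L := by rw [← mul_assoc, n1]
    calc M * L = (M * L)ᵀ := m4.symm
    _ = Lᵀ * Mᵀ := Matrix.transpose_mul _ _
    _ = (L * (N * L))ᵀ * Mᵀ := by rw [hLNL]
    _ = ((N * L)ᵀ * Lᵀ) * Mᵀ := by rw [Matrix.transpose_mul L (N * L)]
    _ = (N * L)ᵀ * (Lᵀ * Mᵀ) := mul_assoc _ _ _
    _ = (N * L) * (M * L)ᵀ := by rw [n4, ← Matrix.transpose_mul]
    _ = (N * L) * (M * L) := by rw [m4]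
    _ = N * ((L * M) * L) := by rw [mul_assoc, ← mul_assoc L M L]
    _ = N * L := by rw [m1]
  calc M = M * L * M := m2.symm
  _ = N * L * M := by rw [h2]
  _ = N * (L * M) := mul_assoc _ _ _
  _ = N * (L * N) := by rw [h1]
  _ = N * L * N := (mul_assoc _ _ _).symm
  _ = N := n2

private lemma isMP_transpose {L M : Matrix (Fin n) (Fin n) ℝ} (h : IsMP L M) :
    IsMP Lᵀ Mᵀ := by
  obtain ⟨m1, m2, m3, m4⟩ := h
  refine ⟨?_, ?_, ?_, ?_⟩
  · have e : (L * M * L)ᵀ = Lᵀ * Mᵀ * Lᵀ := by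
      simp [Matrix.transpose_mul, mul_assoc]
    rw [← e, m1]
  · have e : (M * L * M)ᵀ = Mᵀ * Lᵀ * Mᵀ := by
      simp [Matrix.transpose_mul, mul_assoc]
    rw [← e, m2]
  · rw [← Matrix.transpose_mul M L, Matrix.transpose_transpose]
    exact m4.symm
  · rw [← Matrix.transpose_mul L M, Matrix.transpose_transpose]
    exact m3.symm

private lemma mp_symm {L M : Matrix (Fin n) (Fin n) ℝ} (hLs : Lᵀ = L) (h : IsMP L M) :
    Mᵀ = M := by
  have h' := isMP_transpose h
  rw [hLs] at h'
  exact isMP_unique h' h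

private lemma quad_red {M : Matrix (Fin n) (Fin n) ℝ} (hMs : Mᵀ = M) {x p : Fin n → ℝ}
    (hk : M *ᵥ (x - p) = 0) : x ⬝ᵥ (M *ᵥ x) = p ⬝ᵥ (M *ᵥ p) := by
  have hMx : M *ᵥ x = M *ᵥ p := by
    have : M *ᵥ x - M *ᵥ p = 0 := by rw [← Matrix.mulVec_sub]; exact hk
    exact sub_eq_zero.mp this
  calc x ⬝ᵥ (M *ᵥ x) = x ⬝ᵥ (M *ᵥ p) := by rw [hMx]
  _ = (M *ᵥ x) ⬝ᵥ p := (sym_shift hMs x p).symm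
  _ = (M *ᵥ p) ⬝ᵥ p := by rw [hMx]
  _ = p ⬝ᵥ (M *ᵥ p) := sym_shift hMs p p

private lemma key_ineq {P Pp : Matrix (Fin n) (Fin n) ℝ} (hPs : Pᵀ = P) (hPps : Ppᵀ = Pp)
    (hQP : ∀ y, 0 ≤ y ⬝ᵥ (P *ᵥ y)) (hPen2 : Pp * P * Pp = Pp)
    {x : Fin n → ℝ} (hx : P *ᵥ (Pp *ᵥ x) = x) (y : Fin n → ℝ) :
    2 * (y ⬝ᵥ x) - y ⬝ᵥ (P *ᵥ y) ≤ x ⬝ᵥ (Pp *ᵥ x) := by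
  have h0 := hQP (y - Pp *ᵥ x)
  have hy1 : y ⬝ᵥ (P *ᵥ (Pp *ᵥ x)) = y ⬝ᵥ x := by rw [hx]
  have hy2 : (Pp *ᵥ x) ⬝ᵥ (P *ᵥ y) = y ⬝ᵥ x := by
    rw [dotProduct_comm, sym_shift hPs, hx]
  have hy3 : (Pp *ᵥ x) ⬝ᵥ (P *ᵥ (Pp *ᵥ x)) = x ⬝ᵥ (Pp *ᵥ x) := by
    rw [sym_shift hPps]
    congr 1
    rw [Matrix.mulVec_mulVec, Matrix.mulVec_mulVec, hPen2]
  have e1 : (y - Pp *ᵥ x) ⬝ᵥ (P *ᵥ (y - Pp *ᵥ x))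
      = y ⬝ᵥ (P *ᵥ y) - 2 * (y ⬝ᵥ x) + x ⬝ᵥ (Pp *ᵥ x) := by
    rw [Matrix.mulVec_sub, sub_dotProduct, dotProduct_sub,
      dotProduct_sub, hy1, hy2, hy3]
    ring
  linarith [e1 ▸ h0]

end SpecAux
section SpecCore

open Matrix

variable {n : ℕ}

private lemma spec_core (α : ℝ) (hα0 : 0 ≤ α) (hα1 : α < 1)
    (L Lt : Matrix (Fin n) (Fin n) ℝ) (hL : L.PosSemidef) (hLt : Lt.PosSemidef)
    (happ : ∀ x : Fin n → ℝ,
      (1 - α) * (x ⬝ᵥ (L *ᵥ x)) ≤ x ⬝ᵥ (Lt *ᵥ x) ∧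
      x ⬝ᵥ (Lt *ᵥ x) ≤ (1 + α) * (x ⬝ᵥ (L *ᵥ x)))
    (Lp Ltp : Matrix (Fin n) (Fin n) ℝ) (hLp : IsMP L Lp) (hLtp : IsMP Lt Ltp) :
    (∀ x : Fin n → ℝ, Lt *ᵥ x = 0 ↔ L *ᵥ x = 0) ∧
    (∀ x : Fin n → ℝ,
      (1 / (1 + α)) * (x ⬝ᵥ (Lp *ᵥ x)) ≤ x ⬝ᵥ (Ltp *ᵥ x) ∧
      x ⬝ᵥ (Ltp *ᵥ x) ≤ (1 / (1 - α)) * (x ⬝ᵥ (Lp *ᵥ x))) := by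
  have hLs : Lᵀ = L := by
    rw [← Matrix.conjTranspose_eq_transpose_of_trivial]; exact hL.1
  have hLts : Ltᵀ = Lt := by
    rw [← Matrix.conjTranspose_eq_transpose_of_trivial]; exact hLt.1
  have hQL : ∀ x, 0 ≤ x ⬝ᵥ (L *ᵥ x) := fun x => by simpa using hL.dotProduct_mulVec_nonneg x
  have hQLt : ∀ x, 0 ≤ x ⬝ᵥ (Lt *ᵥ x) := fun x => by simpa using hLt.dotProduct_mulVec_nonneg x
  have hQL0 : ∀ x, x ⬝ᵥ (L *ᵥ x) = 0 ↔ L *ᵥ x = 0 := fun x => by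
    simpa using hL.dotProduct_mulVec_zero_iff x
  have hQLt0 : ∀ x, x ⬝ᵥ (Lt *ᵥ x) = 0 ↔ Lt *ᵥ x = 0 := fun x => by
    simpa using hLt.dotProduct_mulVec_zero_iff x
  have h1a : (0:ℝ) < 1 + α := by linarith
  have h1a' : (0:ℝ) < 1 - α := by linarith
  have hker : ∀ x : Fin n → ℝ, Lt *ᵥ x = 0 ↔ L *ᵥ x = 0 := by
    intro x
    constructor
    · intro h
      have h0 : x ⬝ᵥ (Lt *ᵥ x) = 0 := (hQLt0 x).mpr h
      have h1 := (happ x).1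
      have h2 : x ⬝ᵥ (L *ᵥ x) = 0 := by nlinarith [hQL x]
      exact (hQL0 x).mp h2
    · intro h
      have h0 : x ⬝ᵥ (L *ᵥ x) = 0 := (hQL0 x).mpr h
      have h1 := (happ x).2
      have h2 : x ⬝ᵥ (Lt *ᵥ x) = 0 := by nlinarith [hQLt x]
      exact (hQLt0 x).mp h2
  refine ⟨hker, ?_⟩
  have hLps : Lpᵀ = Lp := mp_symm hLs hLp
  have hLtps : Ltpᵀ = Ltp := mp_symm hLts hLtp
  obtain ⟨p1, p2, p3, p4⟩ := hLp
  obtain ⟨t1, t2, t3, t4⟩ := hLtp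
  have hcomm : L * Lp = Lp * L := by
    calc L * Lp = Lᵀ * Lpᵀ := by rw [hLs, hLps]
    _ = (Lp * L)ᵀ := (Matrix.transpose_mul _ _).symm
    _ = Lp * L := p4
  have htcomm : Lt * Ltp = Ltp * Lt := by
    calc Lt * Ltp = Ltᵀ * Ltpᵀ := by rw [hLts, hLtps]
    _ = (Ltp * Lt)ᵀ := (Matrix.transpose_mul _ _).symm
    _ = Ltp * Lt := t4
  have I4 : Lp * Lp * L = Lp := by rw [mul_assoc, ← hcomm, ← mul_assoc, p2]
  have It4 : Ltp * Ltp * Lt = Ltp := by rw [mul_assoc, ← htcomm, ← mul_assoc, t2]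
  have It3 : Lt * Lt * Ltp = Lt := by rw [mul_assoc, htcomm, ← mul_assoc, t1]
  have I3 : L * L * Lp = L := by rw [mul_assoc, hcomm, ← mul_assoc, p1]
  intro x
  set p : Fin n → ℝ := L *ᵥ (Lp *ᵥ x) with hp
  set k : Fin n → ℝ := x - p with hkdef
  have hLp_x : L *ᵥ p = L *ᵥ x := by
    rw [hp, Matrix.mulVec_mulVec, Matrix.mulVec_mulVec, I3]
  have hLk : L *ᵥ k = 0 := by
    rw [hkdef, Matrix.mulVec_sub, hLp_x, sub_self]
  have hLpk : Lp *ᵥ k = 0 := by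
    calc Lp *ᵥ k = (Lp * Lp * L) *ᵥ k := by rw [I4]
    _ = (Lp * Lp) *ᵥ (L *ᵥ k) := by rw [← Matrix.mulVec_mulVec]
    _ = 0 := by rw [hLk, Matrix.mulVec_zero]
  have hLtk : Lt *ᵥ k = 0 := (hker k).mpr hLk
  have hLtpk : Ltp *ᵥ k = 0 := by
    calc Ltp *ᵥ k = (Ltp * Ltp * Lt) *ᵥ k := by rw [It4]
    _ = (Ltp * Ltp) *ᵥ (Lt *ᵥ k) := by rw [← Matrix.mulVec_mulVec]
    _ = 0 := by rw [hLtk, Matrix.mulVec_zero]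
  have hq1 : x ⬝ᵥ (Lp *ᵥ x) = p ⬝ᵥ (Lp *ᵥ p) := quad_red hLps hLpk
  have hq2 : x ⬝ᵥ (Ltp *ᵥ x) = p ⬝ᵥ (Ltp *ᵥ p) := quad_red hLtps hLtpk
  have hLpp : Lp *ᵥ p = Lp *ᵥ x := by
    have : Lp *ᵥ x - Lp *ᵥ p = 0 := by rw [← Matrix.mulVec_sub]; exact hLpk
    exact (sub_eq_zero.mp this).symm
  have hrangeL : L *ᵥ (Lp *ᵥ p) = p := by rw [hLpp]
  have hrangeLt : Lt *ᵥ (Ltp *ᵥ p) = p := by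
    set r : Fin n → ℝ := p - Lt *ᵥ (Ltp *ᵥ p) with hr
    have hLtr : Lt *ᵥ r = 0 := by
      have e : Lt *ᵥ (Lt *ᵥ (Ltp *ᵥ p)) = Lt *ᵥ p := by
        rw [Matrix.mulVec_mulVec, Matrix.mulVec_mulVec, It3]
      rw [hr, Matrix.mulVec_sub, e, sub_self]
    have hLr : L *ᵥ r = 0 := (hker r).mp hLtr
    have hrp : r ⬝ᵥ p = 0 := by
      rw [hp, ← sym_shift hLs, hLr, zero_dotProduct]
    have hrq : r ⬝ᵥ (Lt *ᵥ (Ltp *ᵥ p)) = 0 := by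
      rw [← sym_shift hLts, hLtr, zero_dotProduct]
    have hrr : r ⬝ᵥ r = 0 := by
      calc r ⬝ᵥ r = r ⬝ᵥ p - r ⬝ᵥ (Lt *ᵥ (Ltp *ᵥ p)) := by
            rw [hr, dotProduct_sub]
      _ = 0 := by rw [hrp, hrq, sub_self]
    have : r = 0 := dotProduct_self_eq_zero.mp hrr
    have := sub_eq_zero.mp (hr ▸ this)
    exact this.symm
  -- abbreviations
  set q : ℝ := p ⬝ᵥ (Lp *ᵥ p) with hq
  set qt : ℝ := p ⬝ᵥ (Ltp *ᵥ p) with hqt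
  have hLpLLp : (Lp *ᵥ p) ⬝ᵥ (L *ᵥ (Lp *ᵥ p)) = q := by
    rw [sym_shift hLps, Matrix.mulVec_mulVec, Matrix.mulVec_mulVec, p2]
  have hLtpLtLtp : (Ltp *ᵥ p) ⬝ᵥ (Lt *ᵥ (Ltp *ᵥ p)) = qt := by
    rw [sym_shift hLtps, Matrix.mulVec_mulVec, Matrix.mulVec_mulVec, t2]
  have hdc : (Lp *ᵥ p) ⬝ᵥ p = q := by rw [dotProduct_comm]
  have hdct : (Ltp *ᵥ p) ⬝ᵥ p = qt := by rw [dotProduct_comm]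
  constructor
  · -- lower bound
    have key := key_ineq hLts hLtps hQLt t2 hrangeLt ((1 / (1 + α)) • (Lp *ᵥ p))
    have e1 : ((1 / (1 + α)) • (Lp *ᵥ p)) ⬝ᵥ p = (1 / (1 + α)) * q := by
      rw [smul_dotProduct, hdc]; simp
    have e2 : ((1 / (1 + α)) • (Lp *ᵥ p)) ⬝ᵥ (Lt *ᵥ ((1 / (1 + α)) • (Lp *ᵥ p)))
        = (1 / (1 + α)) * ((1 / (1 + α)) * ((Lp *ᵥ p) ⬝ᵥ (Lt *ᵥ (Lp *ᵥ p)))) := by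
      rw [Matrix.mulVec_smul, smul_dotProduct, dotProduct_smul]; simp
    have hS : (Lp *ᵥ p) ⬝ᵥ (Lt *ᵥ (Lp *ᵥ p)) ≤ (1 + α) * q := by
      have := (happ (Lp *ᵥ p)).2
      rwa [hLpLLp] at this
    rw [e1, e2, ← hqt] at key
    rw [hq1, hq2]
    have hc : (0:ℝ) < 1 / (1 + α) := by positivity
    have hy : (1 / (1 + α)) * ((1 / (1 + α)) * ((1 + α) * q)) = (1 / (1 + α)) * q := by
      field_simp
    have hSS : (1 / (1 + α)) * ((1 / (1 + α)) * ((Lp *ᵥ p) ⬝ᵥ (Lt *ᵥ (Lp *ᵥ p))))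
        ≤ (1 / (1 + α)) * ((1 / (1 + α)) * ((1 + α) * q)) :=
      mul_le_mul_of_nonneg_left (mul_le_mul_of_nonneg_left hS hc.le) hc.le
    linarith [key, hSS, hy]
  · -- upper bound
    have key := key_ineq hLs hLps hQL p2 hrangeL ((1 - α) • (Ltp *ᵥ p))
    have e1 : ((1 - α) • (Ltp *ᵥ p)) ⬝ᵥ p = (1 - α) * qt := by
      rw [smul_dotProduct, hdct]; simp
    have e2 : ((1 - α) • (Ltp *ᵥ p)) ⬝ᵥ (L *ᵥ ((1 - α) • (Ltp *ᵥ p)))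
        = (1 - α) * ((1 - α) * ((Ltp *ᵥ p) ⬝ᵥ (L *ᵥ (Ltp *ᵥ p)))) := by
      rw [Matrix.mulVec_smul, smul_dotProduct, dotProduct_smul]; simp
    have hS : (1 - α) * ((Ltp *ᵥ p) ⬝ᵥ (L *ᵥ (Ltp *ᵥ p))) ≤ qt := by
      have := (happ (Ltp *ᵥ p)).1
      rwa [hLtpLtLtp] at this
    rw [e1, e2, ← hq] at key
    rw [hq1, hq2]
    rw [div_mul_eq_mul_div, le_div_iff₀ h1a']
    have hSS : (1 - α) * ((1 - α) * ((Ltp *ᵥ p) ⬝ᵥ (L *ᵥ (Ltp *ᵥ p)))) ≤ (1 - α) * qt :=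
      mul_le_mul_of_nonneg_left hS h1a'.le
    nlinarith [key, hSS]

end SpecCore
section PSDpart

open Matrix

variable {n : ℕ}

private lemma vecMulVec_self_posSemidef (v : Fin n → ℝ) :
    (Matrix.vecMulVec v v).PosSemidef := by
  refine Matrix.PosSemidef.of_dotProduct_mulVec_nonneg ?_ ?_
  · rw [Matrix.IsHermitian, Matrix.conjTranspose_eq_transpose_of_trivial]
    ext a b
    simp [Matrix.vecMulVec_apply, Matrix.transpose_apply, mul_comm]
  · intro x
    have hmv : Matrix.vecMulVec v v *ᵥ x = (v ⬝ᵥ x) • v := by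
      funext a
      simp [Matrix.vecMulVec_apply, Matrix.mulVec, dotProduct, Finset.mul_sum,
        mul_comm, mul_assoc, mul_left_comm]
    simp only [star_trivial, hmv, dotProduct_smul]
    have : x ⬝ᵥ v = v ⬝ᵥ x := dotProduct_comm _ _
    simp only [smul_eq_mul, this]
    exact mul_self_nonneg _

private lemma edgeMat_posSemidef (f : Sym2 (Fin n)) : (edgeMat f).PosSemidef := by
  induction f using Sym2.ind with
  | _ i j =>
    have : edgeMat s(i, j) = Matrix.vecMulVec (dvec i j) (dvec i j) := by
      simp [edgeMat]
    rw [this]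
    exact vecMulVec_self_posSemidef _

private lemma posSemidef_smul' {M : Matrix (Fin n) (Fin n) ℝ} (hM : M.PosSemidef)
    {c : ℝ} (hc : 0 ≤ c) : (c • M).PosSemidef := by
  refine Matrix.PosSemidef.of_dotProduct_mulVec_nonneg ?_ ?_
  · rw [Matrix.IsHermitian, Matrix.conjTranspose_smul, star_trivial, hM.1.eq]
  · intro x
    rw [Matrix.smul_mulVec, dotProduct_smul]
    exact mul_nonneg hc (hM.dotProduct_mulVec_nonneg x)

private lemma lapG_posSemidef (F : Finset (Sym2 (Fin n))) (c : Sym2 (Fin n) → ℝ)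
    (hc : ∀ f ∈ F, 0 ≤ c f) : (lapG F c).PosSemidef := by
  unfold lapG
  refine Finset.sum_induction _ Matrix.PosSemidef (fun a b ha hb => ha.add hb)
    Matrix.PosSemidef.zero (fun f hf => posSemidef_smul' (edgeMat_posSemidef f) (hc f hf))

end PSDpart
/-- **Pseudoinverse quadratic forms under spectral approximation.** If `L, L̃` are real
symmetric PSD matrices with `(1-α)·xᵀLx ≤ xᵀL̃x ≤ (1+α)·xᵀLx` for all `x` and
`0 ≤ α < 1`, then `ker L̃ = ker L` and
`(1/(1+α))·xᵀL⁺x ≤ xᵀL̃⁺x ≤ (1/(1-α))·xᵀL⁺x` for all `x`.  In particular, if `G̃` is an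
`α`-spectral sparsifier of a weighted graph `G`, then the effective resistances satisfy
`(1/(1+α))·R_{ij} ≤ R̃_{ij} ≤ (1/(1-α))·R_{ij}` for every pair of vertices `i, j`. -/
theorem pinv_quadratic_form_spectral_approx (n : ℕ) (α : ℝ) (hα0 : 0 ≤ α) (hα1 : α < 1)
    (L Lt : Matrix (Fin n) (Fin n) ℝ) (hL : L.PosSemidef) (hLt : Lt.PosSemidef)
    (happ : ∀ x : Fin n → ℝ,
      (1 - α) * (x ⬝ᵥ (L *ᵥ x)) ≤ x ⬝ᵥ (Lt *ᵥ x) ∧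
      x ⬝ᵥ (Lt *ᵥ x) ≤ (1 + α) * (x ⬝ᵥ (L *ᵥ x)))
    (Lp Ltp : Matrix (Fin n) (Fin n) ℝ) (hLp : IsMP L Lp) (hLtp : IsMP Lt Ltp) :
    (∀ x : Fin n → ℝ, Lt *ᵥ x = 0 ↔ L *ᵥ x = 0) ∧
    (∀ x : Fin n → ℝ,
      (1 / (1 + α)) * (x ⬝ᵥ (Lp *ᵥ x)) ≤ x ⬝ᵥ (Ltp *ᵥ x) ∧
      x ⬝ᵥ (Ltp *ᵥ x) ≤ (1 / (1 - α)) * (x ⬝ᵥ (Lp *ᵥ x))) ∧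
    (∀ (F : Finset (Sym2 (Fin n))) (c ct : Sym2 (Fin n) → ℝ),
      (∀ f ∈ F, ¬ f.IsDiag) → (∀ f ∈ F, 0 ≤ c f) →
      (∀ f, 0 ≤ ct f) → (∀ f, f ∉ F → ct f = 0) →
      (∀ x : Fin n → ℝ,
        |x ⬝ᵥ (lapG F ct *ᵥ x) - x ⬝ᵥ (lapG F c *ᵥ x)| ≤ α * (x ⬝ᵥ (lapG F c *ᵥ x))) →
      ∀ (Gp Gtp : Matrix (Fin n) (Fin n) ℝ),
        IsMP (lapG F c) Gp → IsMP (lapG F ct) Gtp →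
        ∀ i j : Fin n,
          (1 / (1 + α)) * res Gp s(i, j) ≤ res Gtp s(i, j) ∧
          res Gtp s(i, j) ≤ (1 / (1 - α)) * res Gp s(i, j)) := by
  obtain ⟨h1, h2⟩ := spec_core α hα0 hα1 L Lt hL hLt happ Lp Ltp hLp hLtp
  refine ⟨h1, h2, ?_⟩
  intro F c ct hFd hc hct hct0 habs Gp Gtp hGp hGtp i j
  have hG : (lapG F c).PosSemidef := lapG_posSemidef F c hc
  have hGt : (lapG F ct).PosSemidef := lapG_posSemidef F ct (fun f _ => hct f)
  have happ' : ∀ x : Fin n → ℝ,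
      (1 - α) * (x ⬝ᵥ (lapG F c *ᵥ x)) ≤ x ⬝ᵥ (lapG F ct *ᵥ x) ∧
      x ⬝ᵥ (lapG F ct *ᵥ x) ≤ (1 + α) * (x ⬝ᵥ (lapG F c *ᵥ x)) := by
    intro x
    have h := abs_le.mp (habs x)
    constructor <;> linarith [h.1, h.2]
  have hmain := (spec_core α hα0 hα1 (lapG F c) (lapG F ct) hG hGt happ' Gp Gtp hGp hGtp).2
    (dvec i j)
  have hres1 : res Gp s(i, j) = dvec i j ⬝ᵥ (Gp *ᵥ dvec i j) := by simp [res]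
  have hres2 : res Gtp s(i, j) = dvec i j ⬝ᵥ (Gtp *ᵥ dvec i j) := by simp [res]
  rw [hres1, hres2]
  exact hmain
end
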